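/- arXiv:2410.03614 — 2 statements merged into one kernel-verified Lean document; each statement's English description precedes it below -/
import Mathlib

section
/- Every circuit 𝒞 of the matroid M(L_m) contains at most 2 elements from each of the m−3 column blocks of L_m, where the block indexed by the variable x_j (for j = 1,…,m−3) consists of the j+1 columns corresponding to the linear forms x_j, x_j − 1, x_j − x_1, …, x_j − x_{j−1}. -/
open scoped BigOperators
noncomputable section

namespace ScatteringPaper

open CategoryTheory AlgebraicTopology

/- ## Topological Euler characteristic via rational singular homology -/

/-- The singular chain complex of a topological space, with rational coefficients. -/
def singularChainComplex (X : Type) [TopologicalSpace X] : ChainComplex (ModuleCat ℚ) ℕ :=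
  (alternatingFaceMapComplex (ModuleCat ℚ)).obj
    (((SimplicialObject.whiskering _ _).obj (ModuleCat.free ℚ)).obj (TopCat.toSSet.obj (TopCat.of X)))

/-- The `q`-th (rational) Betti number of a topological space. -/
def betti (X : Type) [TopologicalSpace X] (q : ℕ) : ℕ :=
  Module.finrank ℚ ((singularChainComplex X).homology q)

/-- The topological Euler characteristic, as the alternating sum of Betti numbers. -/
def eulerChar (X : Type) [TopologicalSpace X] : ℤ :=
  ∑ᶠ q : ℕ, (-1 : ℤ) ^ q * (betti X q : ℤ)

variable {d : ℕ} {ι : Type} [Fintype ι] [DecidableEq ι]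

/- ## Hyperplane arrangements: `(ℓ_i(x))_i = (1, x_1, …, x_d) · L` -/

/-- Value of the affine-linear form encoded by column `i` of `L`. -/
def ell (K : Type) [Field K] (L : Matrix (Fin (d+1)) ι K) (x : Fin d → K) (i : ι) : K :=
  L 0 i + ∑ j : Fin d, x j * L j.succ i

/-- The complement `X = ℂ^d ∖ 𝒜` of the arrangement `𝒜 = V(∏ ℓ_i)`. -/
def complementX (L : Matrix (Fin (d+1)) ι ℂ) : Set (Fin d → ℂ) := {x | ∀ i, ell ℂ L x i ≠ 0}

/-- `x ∈ X` is a solution of the scattering equations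
`∂ℒ_u/∂x_k = ∑_i u_i a_{ki}/ℓ_i(x) = 0`, `k = 1, …, d`. -/
def IsSol (L : Matrix (Fin (d+1)) ι ℂ) (u : ι → ℂ) (x : Fin d → ℂ) : Prop :=
  x ∈ complementX L ∧ ∀ k : Fin d, ∑ i : ι, u i * L k.succ i / ell ℂ L x i = 0

/-- An arrangement is essential if some subset of its hyperplanes meets in a single point. -/
def IsEssential (L : Matrix (Fin (d+1)) ι ℂ) : Prop :=
  ∃ (S : Set ι) (x₀ : Fin d → ℂ), {x : Fin d → ℂ | ∀ i ∈ S, ell ℂ L x i = 0} = {x₀}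

/-- `P u` holds for all `u` outside a proper algebraic subset (i.e. for generic `u`). -/
def Generically {σ : Type} [Fintype σ] [DecidableEq σ] (P : (σ → ℂ) → Prop) : Prop :=
  ∃ g : MvPolynomial σ ℂ, g ≠ 0 ∧ ∀ u : σ → ℂ, MvPolynomial.eval u g ≠ 0 → P u

/- ## Matroid data of the columns of `L` -/

/-- Rank of the set `I` of columns of `L` (the matroid rank in `M(L)`). -/
def rkL (K : Type) [Field K] (L : Matrix (Fin (d+1)) ι K) (I : Set ι) : ℕ :=
  Module.finrank K (Submodule.span K ((fun i => fun r => L r i) '' I))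

/-- Rank of the set `I` of columns of `A^⊤` (`L` with its first row deleted). -/
def rkA (K : Type) [Field K] (L : Matrix (Fin (d+1)) ι K) (I : Set ι) : ℕ :=
  Module.finrank K (Submodule.span K ((fun i => fun k : Fin d => L k.succ i) '' I))

/-- `I` is a flat of the matroid `M(L)`. -/
def IsFlat (K : Type) [Field K] (L : Matrix (Fin (d+1)) ι K) (I : Set ι) : Prop :=
  ∀ i ∉ I, rkL K L I < rkL K L (insert i I)

/-- `C` is a circuit of `M(L)`: a minimal linearly dependent set of columns. -/
def IsCircuit (K : Type) [Field K] (L : Matrix (Fin (d+1)) ι K) (C : Finset ι) : Prop :=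
  (¬ LinearIndependent K (fun i : {a // a ∈ C} => fun r => L r i.1)) ∧
  ∀ D : Finset ι, D ⊂ C → LinearIndependent K (fun i : {a // a ∈ D} => fun r => L r i.1)

/-- `M(L)` is connected: there is no separation into two nonempty parts with additive rank. -/
def MatroidConnected (K : Type) [Field K] (L : Matrix (Fin (d+1)) ι K) : Prop :=
  ∀ S : Set ι, S.Nonempty → Sᶜ.Nonempty → rkL K L S + rkL K L Sᶜ ≠ rkL K L Set.univ

/- ## The reciprocal linear space -/

/-- Zariski closure of a subset of affine space `K^ι`. -/
def zarClosure (K : Type) [Field K] (S : Set (ι → K)) : Set (ι → K) :=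
  {v | ∀ f : MvPolynomial ι K, (∀ w ∈ S, MvPolynomial.eval w f = 0) → MvPolynomial.eval v f = 0}

/-- The affine cone over the image of `φ : x ↦ (ℓ_0(x)⁻¹ : ⋯ : ℓ_n(x)⁻¹)`. -/
def coneImage (L : Matrix (Fin (d+1)) ι ℂ) : Set (ι → ℂ) :=
  {v | ∃ (c : ℂ) (x : Fin d → ℂ), x ∈ complementX L ∧ v = fun i => c / ell ℂ L x i}

/-- The vanishing ideal of a subset of affine space. -/
def vanishingIdeal (K : Type) [Field K] (S : Set (ι → K)) : Ideal (MvPolynomial ι K) where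
  carrier := {f | ∀ v ∈ S, MvPolynomial.eval v f = 0}
  add_mem' := by
    intro a b ha hb v hv
    simp [map_add, ha v hv, hb v hv]
  zero_mem' := by intro v hv; simp
  smul_mem' := by
    intro c f hf v hv
    simp [smul_eq_mul, map_mul, hf v hv]

/-- Projective space `ℙ^n = ℙ(ℂ^ι)`. -/
abbrev Pn (ι : Type) [Fintype ι] := Projectivization ℂ (ι → ℂ)

/-- The reciprocal linear space `ℛ_L ⊂ ℙ^n`, the Zariski closure of `im φ`. -/
def RL (L : Matrix (Fin (d+1)) ι ℂ) : Set (Pn ι) :=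
  {p | p.rep ∈ zarClosure ℂ (coneImage L)}

/-- The linear space `𝕃_u = {y : A^⊤ diag(u) y = 0} ⊂ ℙ^n`. -/
def LuSet (L : Matrix (Fin (d+1)) ι ℂ) (u : ι → ℂ) : Set (Pn ι) :=
  {p | ∀ k : Fin d, ∑ i : ι, L k.succ i * u i * p.rep i = 0}

/-- The torus orbit `U_I = {y ∈ ℙ^n : y_i ≠ 0 ⇔ i ∈ I}`. -/
def Ustratum (I : Set ι) : Set (Pn ι) := {p : Pn ι | ∀ i : ι, p.rep i ≠ 0 ↔ i ∈ I}

/-- `p = φ(x)` for the map `φ : x ↦ (ℓ_0(x)⁻¹ : ⋯ : ℓ_n(x)⁻¹)`. -/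
def PhiRel (L : Matrix (Fin (d+1)) ι ℂ) (x : Fin d → ℂ) (p : Pn ι) : Prop :=
  ∃ hv : (fun i => (ell ℂ L x i)⁻¹) ≠ 0, p = Projectivization.mk ℂ (fun i => (ell ℂ L x i)⁻¹) hv

/-- The image of `φ` in `ℙ^n`. -/
def imPhi (L : Matrix (Fin (d+1)) ι ℂ) : Set (Pn ι) :=
  {p | ∃ x ∈ complementX L, PhiRel L x p}

/-- Complement of the subarrangement `𝒜_I`. -/
def subComplement (L : Matrix (Fin (d+1)) ι ℂ) (I : Set ι) : Set (Fin d → ℂ) :=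
  {x | ∀ i ∈ I, ell ℂ L x i ≠ 0}

/-- The affine cone over the image of the reciprocal map of the subarrangement indexed by `I`,
embedded in the coordinate subspace `{y_i = 0, i ∉ I}`. -/
def coneImageSub (L : Matrix (Fin (d+1)) ι ℂ) (I : Set ι) : Set (ι → ℂ) :=
  {v | ∃ (c : ℂ) (x : Fin d → ℂ), x ∈ subComplement L I ∧
      v = I.indicator (fun i => c / ell ℂ L x i)}

/-- The reciprocal linear space `ℛ_{L_I}` of the submatrix `L_I`, embedded in `ℙ^n`. -/
def RLsub (L : Matrix (Fin (d+1)) ι ℂ) (I : Set ι) : Set (Pn ι) :=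
  {p | p.rep ∈ zarClosure ℂ (coneImageSub L I)}

/-- The open stratum `ℛ_{L_I}^∘ = ℛ_{L_I} ∩ U_I`. -/
def RLsubOpen (L : Matrix (Fin (d+1)) ι ℂ) (I : Set ι) : Set (Pn ι) :=
  RLsub L I ∩ Ustratum I

/- ## The very affine variety `X_I = (ℂ^d ∖ 𝒜_I)/K_I` -/

/-- Quotient of `ℂ^d ∖ 𝒜_I` by translation by the left kernel `K_I` of `A_I^⊤`:
two points are identified iff `A_I^⊤` takes the same values on them. -/
def XIsetoid (L : Matrix (Fin (d+1)) ι ℂ) (I : Set ι) : Setoid ↥(subComplement L I) where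
  r x y := ∀ i ∈ I, ∑ k : Fin d, (x : Fin d → ℂ) k * L k.succ i
      = ∑ k : Fin d, (y : Fin d → ℂ) k * L k.succ i
  iseqv := ⟨fun _ _ _ => rfl, fun h i hi => (h i hi).symm, fun h1 h2 i hi => (h1 i hi).trans (h2 i hi)⟩

/-- The very affine variety `X_I = (ℂ^d ∖ 𝒜_I)/K_I`. -/
def XI (L : Matrix (Fin (d+1)) ι ℂ) (I : Set ι) : Type := Quotient (XIsetoid L I)

instance (L : Matrix (Fin (d+1)) ι ℂ) (I : Set ι) : TopologicalSpace (XI L I) :=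
  instTopologicalSpaceQuotient

/-- The complement of the arrangement, over a general field `K`. -/
def complementK (K : Type) [Field K] (L : Matrix (Fin (d+1)) ι K) : Set (Fin d → K) :=
  {x | ∀ i, ell K L x i ≠ 0}

/-- The affine cone over the image of the reciprocal map, over a general field `K`. -/
def coneImageK (K : Type) [Field K] (L : Matrix (Fin (d+1)) ι K) : Set (ι → K) :=
  {v | ∃ (c : K) (x : Fin d → K), x ∈ complementK K L ∧ v = fun i => c / ell K L x i}

/- ## Hilbert functions, degree, Hilbert regularity -/

/-- The Hilbert function of the graded algebra `K[y]/I`: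
`q ↦ dim_K (K[y]/I)_q`. -/
def hilb (K : Type) [Field K] (I : Ideal (MvPolynomial ι K)) (q : ℕ) : ℕ :=
  Module.finrank K ((MvPolynomial.homogeneousSubmodule ι K q).map
    (Ideal.Quotient.mkₐ K I).toLinearMap)

/-- `k` is the degree of the `d`-dimensional projective variety with homogeneous
coordinate ring `K[y]/I`: the Hilbert polynomial has degree `d` and leading
coefficient `k/d!`. -/
def IsProjDegree (K : Type) [Field K] (I : Ideal (MvPolynomial ι K)) (d k : ℕ) : Prop :=
  ∃ P : Polynomial ℚ, (∃ N : ℕ, ∀ q : ℕ, N ≤ q → Polynomial.eval (q : ℚ) P = hilb K I q) ∧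
    P.degree = (d : WithBot ℕ) ∧ P.leadingCoeff = (k : ℚ) / (Nat.factorial d : ℚ)

/-- The Hilbert function, extended by `0` to negative integers. -/
def HFZ (K : Type) [Field K] (I : Ideal (MvPolynomial ι K)) (q : ℤ) : ℕ :=
  if 0 ≤ q then hilb K I q.toNat else 0

/-- The Hilbert regularity: the smallest degree from which the Hilbert function
agrees with a (necessarily unique) polynomial. -/
def HReg (K : Type) [Field K] (I : Ideal (MvPolynomial ι K)) : ℤ :=
  sInf {i : ℤ | ∃ P : Polynomial ℚ, ∀ q : ℤ, i ≤ q → Polynomial.eval (q : ℚ) P = HFZ K I q}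

/-- Column indices of the matrix `L_m`: pairs `0 ≤ a < b ≤ m-2` of labels of the `m-1` finite
points `z_0 = 0, z_1 = 1, z_{k+1} = x_k (k = 1, …, m-3)` on the line, except the pair `(0,1)`
(whose minor `p_{12}` is constant).  The column `(a,b)` encodes the linear form `z_b − z_a`. -/
def ColIdx (m : ℕ) : Type :=
  {p : Fin (m-1) × Fin (m-1) // p.1 < p.2 ∧ ¬((p.1 : ℕ) = 0 ∧ (p.2 : ℕ) = 1)}

instance (m : ℕ) : Fintype (ColIdx m) := by unfold ColIdx; infer_instance
instance (m : ℕ) : DecidableEq (ColIdx m) := by unfold ColIdx; infer_instance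

/-- Coefficient vector of the point `z_t` in the coordinates `(1, x_1, …, x_{m-3})`. -/
def zCoeff (m : ℕ) (t : Fin (m-1)) : Fin (m-3+1) → ℂ :=
  fun r => if (t : ℕ) = (r : ℕ) + 1 then 1 else 0

/-- The `(m-2) × (m(m-3)/2)` coefficient matrix `L_m` of the hyperplane arrangement model of
`𝓜_{0,m}`: column `(a,b)` is the coefficient vector of `z_b − z_a`. -/
def Lm (m : ℕ) : Matrix (Fin (m-3+1)) (ColIdx m) ℂ :=
  Matrix.of fun r c => zCoeff m c.1.2 r - zCoeff m c.1.1 r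
/-- Sum of all coordinates of `zCoeff m t`. -/
private lemma zc_sum' (m : ℕ) (hm : 4 ≤ m) (t : Fin (m-1)) :
    ∑ r : Fin (m-3+1), zCoeff m t r = (1 : ℂ) - (if (t:ℕ) = 0 then 1 else 0) := by
  unfold zCoeff
  by_cases h0 : (t:ℕ) = 0
  · simp [h0]
  · have hlt : (t:ℕ) - 1 < m - 3 + 1 := by have := t.isLt; omega
    have hcong : ∀ r : Fin (m-3+1), ((if (t:ℕ) = (r:ℕ) + 1 then (1:ℂ) else 0)
        = if r = ⟨(t:ℕ)-1, hlt⟩ then (1:ℂ) else 0) := by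
      intro r
      refine if_congr ?_ rfl rfl
      rw [Fin.ext_iff]
      constructor <;> (intro h; simp at h ⊢; omega)
    rw [Finset.sum_congr rfl (fun r _ => hcong r)]
    simp [h0]

/-- Value of `zCoeff m t` at the coordinate of a vertex `w ≥ 1`. -/
private lemma zc_at' (m : ℕ) (t w : Fin (m-1)) (hw : 1 ≤ (w:ℕ)) (hlt : (w:ℕ) - 1 < m - 3 + 1) :
    zCoeff m t ⟨(w:ℕ)-1, hlt⟩ = if t = w then 1 else 0 := by
  unfold zCoeff
  refine if_congr ?_ rfl rfl
  rw [Fin.ext_iff]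
  constructor <;> (intro h; simp at h ⊢; omega)

/-- A circuit carries a linear relation with full support. -/
private lemma exists_rel' (m : ℕ) (C : Finset (ColIdx m)) (hC : IsCircuit ℂ (Lm m) C) :
    ∃ lam : ColIdx m → ℂ,
      (∑ c ∈ C, lam c • (fun r => Lm m r c)) = (0 : Fin (m-3+1) → ℂ) ∧ ∀ c ∈ C, lam c ≠ 0 := by
  obtain ⟨g, hg0, i0, hi0⟩ := Fintype.not_linearIndependent_iff.mp hC.1
  set lam : ColIdx m → ℂ := fun c => if h : c ∈ C then g ⟨c, h⟩ else 0 with hlamdef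
  have hgl : ∀ i : {a // a ∈ C}, lam i.1 = g i := by
    intro i; simp [hlamdef, i.2]
  have hsum : ∑ c ∈ C, lam c • (fun r => Lm m r c) = (0 : Fin (m-3+1) → ℂ) := by
    rw [← Finset.sum_attach C (fun c => lam c • (fun r => Lm m r c))]
    rw [Finset.univ_eq_attach] at hg0
    rw [← hg0]
    exact Finset.sum_congr rfl (fun i _ => by rw [hgl])
  refine ⟨lam, hsum, ?_⟩
  intro c0 hc0 hlam0
  have hD : C.erase c0 ⊂ C := Finset.erase_ssubset hc0
  have hind := hC.2 _ hD
  rw [Fintype.linearIndependent_iff] at hind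
  have hsum' : ∑ i : {a // a ∈ C.erase c0}, lam i.1 • (fun r => Lm m r i.1)
      = (0 : Fin (m-3+1) → ℂ) := by
    rw [Finset.univ_eq_attach,
      Finset.sum_attach (C.erase c0) (fun c => lam c • (fun r => Lm m r c)),
      Finset.sum_erase _ (by rw [hlam0, zero_smul])]
    exact hsum
  have hall := hind (fun i => lam i.1) hsum'
  have h1 : lam i0.1 ≠ 0 := by rw [hgl]; exact hi0
  have h2 : i0.1 ∈ C.erase c0 :=
    Finset.mem_erase.mpr ⟨by rintro rfl; exact h1 hlam0, i0.2⟩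
  exact h1 (hall ⟨i0.1, h2⟩)

/-- "Flow conservation" at every vertex `w`, from a linear relation among the columns. -/
private lemma key' (m : ℕ) (hm : 4 ≤ m) (C : Finset (ColIdx m)) (lam : ColIdx m → ℂ)
    (hrel : (∑ c ∈ C, lam c • (fun r => Lm m r c)) = (0 : Fin (m-3+1) → ℂ)) (w : Fin (m-1)) :
    ∑ c ∈ C, lam c * ((if c.1.2 = w then 1 else 0) - (if c.1.1 = w then 1 else 0) : ℂ) = 0 := by
  by_cases hw : (w:ℕ) = 0
  · have h := congrArg (fun f : Fin (m-3+1) → ℂ => ∑ r, f r) hrel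
    simp only [Finset.sum_apply, Pi.smul_apply, smul_eq_mul, Pi.zero_apply,
      Finset.sum_const_zero] at h
    rw [Finset.sum_comm] at h
    have hc : ∀ c ∈ C, (∑ r, lam c * Lm m r c)
        = -(lam c * ((if c.1.2 = w then 1 else 0) - (if c.1.1 = w then 1 else 0) : ℂ)) := by
      intro c _
      rw [← Finset.mul_sum]
      have hsr : (∑ r, Lm m r c)
          = ((if (c.1.1:ℕ) = 0 then 1 else 0) - (if (c.1.2:ℕ) = 0 then 1 else 0) : ℂ) := by
        show (∑ r, (zCoeff m c.1.2 r - zCoeff m c.1.1 r)) = _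
        rw [Finset.sum_sub_distrib, zc_sum' m hm, zc_sum' m hm]
        ring
      rw [hsr]
      have e1 : (if c.1.1 = w then (1:ℂ) else 0) = (if (c.1.1:ℕ) = 0 then 1 else 0) :=
        if_congr (by rw [Fin.ext_iff, hw]) rfl rfl
      have e2 : (if c.1.2 = w then (1:ℂ) else 0) = (if (c.1.2:ℕ) = 0 then 1 else 0) :=
        if_congr (by rw [Fin.ext_iff, hw]) rfl rfl
      rw [e1, e2]; ring
    rw [Finset.sum_congr rfl hc, Finset.sum_neg_distrib, neg_eq_zero] at h
    exact h
  · have hlt : (w:ℕ) - 1 < m - 3 + 1 := by have := w.isLt; omega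
    have h := congrFun hrel ⟨(w:ℕ)-1, hlt⟩
    simp only [Finset.sum_apply, Pi.smul_apply, smul_eq_mul, Pi.zero_apply] at h
    have heq : ∑ c ∈ C, lam c * ((if c.1.2 = w then 1 else 0) - (if c.1.1 = w then 1 else 0) : ℂ)
        = ∑ c ∈ C, lam c * Lm m ⟨(w:ℕ)-1, hlt⟩ c := by
      refine Finset.sum_congr rfl (fun c _ => ?_)
      congr 1
      show _ = zCoeff m c.1.2 ⟨(w:ℕ)-1, hlt⟩ - zCoeff m c.1.1 ⟨(w:ℕ)-1, hlt⟩
      rw [zc_at' m _ w (by omega) hlt, zc_at' m _ w (by omega) hlt]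
    rw [heq]
    exact h

/-- Lemma 5.2.  Every circuit of `M(L_m)` contains at most two columns
from each of the `m-3` column blocks of `L_m` (the block of the variable `x_j` consists of
the columns `(a, j+1)`, i.e. the forms `x_j, x_j − 1, x_j − x_1, …, x_j − x_{j-1}`). -/
theorem circuit_meets_each_block_in_at_most_two
    (m : ℕ) (hm : 4 ≤ m) (C : Finset (ColIdx m)) (hC : IsCircuit ℂ (Lm m) C) :
    ∀ b : Fin (m-1), (C.filter (fun c => c.1.2 = b)).card ≤ 2 := by
  classical
  intro b
  by_contra hcon
  push_neg at hcon
  -- notation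
  obtain ⟨lam, hrel, hfull⟩ := exists_rel' m C hC
  -- every touched vertex has degree ≥ 2
  have hdeg2 : ∀ w : Fin (m-1), ∀ e ∈ C, (e.1.1 = w ∨ e.1.2 = w) →
      2 ≤ (C.filter (fun c => c.1.1 = w ∨ c.1.2 = w)).card := by
    intro w e he hew
    have hkey := key' m hm C lam hrel w
    have hfil : ∑ c ∈ C.filter (fun c => c.1.1 = w ∨ c.1.2 = w),
        lam c * ((if c.1.2 = w then 1 else 0) - (if c.1.1 = w then 1 else 0) : ℂ) = 0 := by
      rw [Finset.sum_filter_of_ne]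
      · exact hkey
      · intro c _ hne
        by_contra hnot
        push_neg at hnot
        simp [hnot.1, hnot.2] at hne
    have hein : e ∈ C.filter (fun c => c.1.1 = w ∨ c.1.2 = w) :=
      Finset.mem_filter.mpr ⟨he, hew⟩
    by_contra hlt2
    push_neg at hlt2
    have h1 : (C.filter (fun c => c.1.1 = w ∨ c.1.2 = w)).card = 1 := by
      have : 0 < (C.filter (fun c => c.1.1 = w ∨ c.1.2 = w)).card :=
        Finset.card_pos.mpr ⟨e, hein⟩
      omega
    obtain ⟨a, ha⟩ := Finset.card_eq_one.mp h1
    have hae : e = a := by rw [ha] at hein; simpa using hein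
    rw [ha, Finset.sum_singleton, ← hae] at hfil
    have hne12 : e.1.1 ≠ e.1.2 := ne_of_lt e.2.1
    have hvne : ((if e.1.2 = w then 1 else 0) - (if e.1.1 = w then 1 else 0) : ℂ) ≠ 0 := by
      rcases hew with h | h
      · have h2 : ¬ (e.1.2 = w) := fun hh => hne12 (h.trans hh.symm)
        simp [h, h2]
      · have h2 : ¬ (e.1.1 = w) := fun hh => hne12 (hh.trans h.symm)
        simp [h, h2]
    exact hfull e he ((mul_eq_zero.mp hfil).resolve_right hvne)
  -- the set of touched vertices
  set T : Finset (Fin (m-1)) :=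
    Finset.univ.filter (fun w => ∃ c ∈ C, c.1.1 = w ∨ c.1.2 = w) with hTdef
  have hmemT : ∀ c ∈ C, ∀ w : Fin (m-1), (c.1.1 = w ∨ c.1.2 = w) → w ∈ T := by
    intro c hc w hw
    exact Finset.mem_filter.mpr ⟨Finset.mem_univ _, ⟨c, hc, hw⟩⟩
  -- some edge at b
  obtain ⟨e, hemem⟩ : (C.filter (fun c => c.1.2 = b)).Nonempty :=
    Finset.card_pos.mp (by omega)
  have heC : e ∈ C := (Finset.mem_filter.mp hemem).1
  have heb : e.1.2 = b := (Finset.mem_filter.mp hemem).2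
  have hbT : b ∈ T := hmemT e heC b (Or.inr heb)
  -- degree bounds
  have hsub : C.filter (fun c => c.1.2 = b) ⊆ C.filter (fun c => c.1.1 = b ∨ c.1.2 = b) := by
    intro c hc
    exact Finset.mem_filter.mpr ⟨(Finset.mem_filter.mp hc).1, Or.inr (Finset.mem_filter.mp hc).2⟩
  have hdegb : 3 ≤ (C.filter (fun c => c.1.1 = b ∨ c.1.2 = b)).card :=
    le_trans hcon (Finset.card_le_card hsub)
  -- counting: sum of degrees over T
  have hupper : ∑ w ∈ T, (C.filter (fun c => c.1.1 = w ∨ c.1.2 = w)).card ≤ 2 * C.card := by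
    have h1 : ∑ w ∈ T, (C.filter (fun c => c.1.1 = w ∨ c.1.2 = w)).card
        ≤ ∑ w : Fin (m-1), (C.filter (fun c => c.1.1 = w ∨ c.1.2 = w)).card :=
      Finset.sum_le_sum_of_subset (Finset.filter_subset _ _)
    have h2 : ∑ w : Fin (m-1), (C.filter (fun c => c.1.1 = w ∨ c.1.2 = w)).card
        = 2 * C.card := by
      simp only [Finset.card_filter]
      rw [Finset.sum_comm]
      have hin : ∀ c ∈ C, (∑ w : Fin (m-1), if c.1.1 = w ∨ c.1.2 = w then 1 else 0) = 2 := by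
        intro c _
        rw [← Finset.card_filter]
        have : Finset.univ.filter (fun w => c.1.1 = w ∨ c.1.2 = w) = {c.1.1, c.1.2} := by
          ext w
          simp [eq_comm, or_comm]
        rw [this]
        exact Finset.card_pair (ne_of_lt c.2.1)
      rw [Finset.sum_congr rfl hin, Finset.sum_const, smul_eq_mul, mul_comm]
    exact le_trans h1 (le_of_eq h2)
  have hlower : 2 * (T.card - 1) + 3 ≤ ∑ w ∈ T, (C.filter (fun c => c.1.1 = w ∨ c.1.2 = w)).card := by
    rw [← Finset.add_sum_erase T _ hbT]
    have h2 : 2 * (T.card - 1) ≤ ∑ w ∈ T.erase b, (C.filter (fun c => c.1.1 = w ∨ c.1.2 = w)).card := by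
      have := Finset.card_nsmul_le_sum (T.erase b)
        (fun w => (C.filter (fun c => c.1.1 = w ∨ c.1.2 = w)).card) 2
        (fun w hw => by
          obtain ⟨_, hwT⟩ := Finset.mem_erase.mp hw
          obtain ⟨_, c, hc, hcw⟩ := Finset.mem_filter.mp hwT
          exact hdeg2 w c hc hcw)
      rw [Finset.card_erase_of_mem hbT] at this
      simpa [mul_comm] using this
    omega
  have hTpos : 0 < T.card := Finset.card_pos.mpr ⟨b, hbT⟩
  have hCT : T.card + 1 ≤ C.card := by omega
  -- dimension argument
  set D := C.erase e with hDdef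
  have hind := hC.2 D (Finset.erase_ssubset heC)
  set G : Finset (Fin (m-3+1) → ℂ) := (T.erase b).image (fun w => zCoeff m w - zCoeff m b) with hGdef
  set W := Submodule.span ℂ (G : Set (Fin (m-3+1) → ℂ)) with hWdef
  have hmemW : ∀ c ∈ C, (fun r => Lm m r c) ∈ W := by
    intro c hc
    have hterm : ∀ w : Fin (m-1), (c.1.1 = w ∨ c.1.2 = w) → zCoeff m w - zCoeff m b ∈ W := by
      intro w hw
      by_cases hwb : w = b
      · rw [hwb, sub_self]; exact Submodule.zero_mem _
      · exact Submodule.subset_span (Finset.mem_coe.mpr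
          (Finset.mem_image_of_mem _ (Finset.mem_erase.mpr ⟨hwb, hmemT c hc w hw⟩)))
    have hcol : (fun r => Lm m r c)
        = (zCoeff m c.1.2 - zCoeff m b) - (zCoeff m c.1.1 - zCoeff m b) := by
      funext r
      show zCoeff m c.1.2 r - zCoeff m c.1.1 r = _
      simp only [Pi.sub_apply]
      ring
    rw [hcol]
    exact Submodule.sub_mem _ (hterm c.1.2 (Or.inr rfl)) (hterm c.1.1 (Or.inl rfl))
  have hf : LinearIndependent ℂ (fun i : {a // a ∈ D} =>
      (⟨(fun r => Lm m r i.1), hmemW i.1 (Finset.erase_subset _ _ i.2)⟩ : W)) :=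
    LinearIndependent.of_comp W.subtype hind
  have hcard := hf.fintype_card_le_finrank
  rw [Fintype.card_coe] at hcard
  have hWle : Module.finrank ℂ W ≤ G.card := finrank_span_finset_le_card G
  have hG : G.card ≤ T.card - 1 := by
    refine le_trans Finset.card_image_le ?_
    rw [Finset.card_erase_of_mem hbT]
  have hDcard : D.card = C.card - 1 := Finset.card_erase_of_mem heC
  omega

end ScatteringPaper
end
end

section
/- For each r = 0, 1, …, m−4, there are exactly C(m−3, r) flats I of the matroid M(L_m) of type (ii) whose corresponding column submatrix of L_m is equivalent to L_{m−r}. Explicitly, these flats are I_r(W) = {x_i : i ∈ W} ∪ {x_j − x_i : j ∈ W, i ∈ {0} ∪ W, i < j} (with x_0 = 1, so x_j − x_0 = x_j − 1), where W ranges over the (m−3−r)-element subsets of {1,…,m−3}. -/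
open scoped BigOperators
noncomputable section

namespace ScatteringPaper

open CategoryTheory AlgebraicTopology

variable {d : ℕ} {ι : Type} [Fintype ι] [DecidableEq ι]

/-- The flat `I_r(W) = {x_i : i ∈ W} ∪ {x_j − x_i : j ∈ W, i ∈ {0} ∪ W, i < j}` (with
`x_0 = 1`), as a set of columns of `L_m`: the column `(a,b)` encodes `z_b − z_a`, where
`z_0 = 0, z_1 = 1, z_{i+1} = x_i`. -/
def Iflat (m : ℕ) (W : Finset ℕ) : Set (ColIdx m) :=
  {c | (∃ i ∈ W, (c.1.2 : ℕ) = i + 1) ∧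
       ((c.1.1 : ℕ) = 0 ∨ (c.1.1 : ℕ) = 1 ∨ ∃ i ∈ W, (c.1.1 : ℕ) = i + 1)}

/-- The column submatrix of `L_m` indexed by `I` is equivalent to `L_{m-r}`: it equals
`L_{m-r}` after deleting `r` zero rows. -/
def SubmatrixEquivLm (m r : ℕ) (I : Set (ColIdx m)) : Prop :=
  ∃ (ρ : Fin (m-r-3+1) → Fin (m-3+1)) (e : ColIdx (m-r) ≃ I),
    StrictMono ρ ∧
    (∀ t : Fin (m-3+1), t ∉ Set.range ρ → ∀ c ∈ I, Lm m t c = 0) ∧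
    (∀ (t : Fin (m-r-3+1)) (c : ColIdx (m-r)), Lm (m-r) t c = Lm m (ρ t) (↑(e c) : ColIdx m))

section Statement14Helpers

/- ## helper lemmas -/
open Submodule

lemma Lm_apply (m : ℕ) (t : Fin (m-3+1)) (c : ColIdx m) :
    Lm m t c = (if ((c.1.2 : Fin (m-1)) : ℕ) = (t:ℕ)+1 then (1:ℂ) else 0)
      - (if ((c.1.1 : Fin (m-1)) : ℕ) = (t:ℕ)+1 then (1:ℂ) else 0) := rfl

/-- columns of `Lm` as vectors -/
def colfun (m : ℕ) : ColIdx m → (Fin (m-3+1) → ℂ) := fun i => fun r => Lm m r i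

def colfunA (m : ℕ) : ColIdx m → (Fin (m-3) → ℂ) := fun i => fun k => Lm m k.succ i

lemma rkL_def (m : ℕ) (I : Set (ColIdx m)) :
    rkL ℂ (Lm m) I = Module.finrank ℂ (Submodule.span ℂ (colfun m '' I)) := rfl

lemma rkA_def (m : ℕ) (I : Set (ColIdx m)) :
    rkA ℂ (Lm m) I = Module.finrank ℂ (Submodule.span ℂ (colfunA m '' I)) := rfl

def single1 (n : ℕ) : Fin n → (Fin n → ℂ) := fun s => Pi.single s 1

lemma span_single_le_ker {n : ℕ} (S : Finset (Fin n)) (j : Fin n) (hj : j ∉ S) :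
    span ℂ (single1 n '' (S : Set (Fin n)))
      ≤ LinearMap.ker (LinearMap.proj j : (Fin n → ℂ) →ₗ[ℂ] ℂ) := by
  rw [span_le]
  rintro _ ⟨s, hs, rfl⟩
  have hsj : j ≠ s := by rintro rfl; exact hj hs
  simp [LinearMap.mem_ker, single1, Pi.single_apply, hsj]

lemma apply_eq_zero_of_mem_span_single {n : ℕ} {S : Finset (Fin n)} {j : Fin n} (hj : j ∉ S)
    {v : Fin n → ℂ}
    (hv : v ∈ span ℂ (single1 n '' (S : Set (Fin n)))) :
    v j = 0 :=
  span_single_le_ker S j hj hv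

lemma finrank_span_single {n : ℕ} (S : Finset (Fin n)) :
    Module.finrank ℂ (span ℂ (single1 n '' (S : Set (Fin n))))
      = S.card := by
  have himg : single1 n '' (S : Set (Fin n))
      = Set.range (fun s : (S : Set (Fin n)) => single1 n s) :=
    Set.image_eq_range _ _
  rw [himg]
  have li : LinearIndependent ℂ (fun s : (S : Set (Fin n)) => single1 n s) := by
    have hinj : Function.Injective (fun s : (S : Set (Fin n)) => (s : Fin n)) :=
      fun a b h => Subtype.ext h
    have h2 := (Pi.basisFun ℂ (Fin n)).linearIndependent.comp
      (fun s : (S : Set (Fin n)) => (s : Fin n)) hinj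
    simpa [single1, Function.comp_def] using h2
  rw [finrank_span_eq_card li]
  simp


/- ## zCoeff lemmas -/

lemma zCoeff_eq_zero {m : ℕ} (x : Fin (m-1)) (hx : (x:ℕ) = 0) : zCoeff m x = 0 := by
  funext t; simp [zCoeff, hx]

lemma zCoeff_eq_single {m : ℕ} (x : Fin (m-1)) (j : Fin (m-3+1)) (hx : (x:ℕ) = (j:ℕ)+1) :
    zCoeff m x = single1 (m-3+1) j := by
  funext t
  simp only [zCoeff, single1, hx, Pi.single_apply]
  by_cases h : t = j
  · simp [h]
  · have : ¬ ((j:ℕ)+1 = (t:ℕ)+1) := by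
      intro hh; exact h (Fin.ext (by omega))
    simp [this, h]; exact fun hh => h (Fin.ext hh.symm)

lemma colfun_eq {m : ℕ} (c : ColIdx m) :
    colfun m c = zCoeff m c.1.2 - zCoeff m c.1.1 := rfl

def zCoeffA (m : ℕ) (x : Fin (m-1)) : Fin (m-3) → ℂ := fun k => zCoeff m x k.succ

lemma colfunA_eq {m : ℕ} (c : ColIdx m) :
    colfunA m c = zCoeffA m c.1.2 - zCoeffA m c.1.1 := rfl

lemma zCoeffA_eq_zero {m : ℕ} (x : Fin (m-1)) (hx : (x:ℕ) ≤ 1) : zCoeffA m x = 0 := by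
  funext k
  have : ¬ ((x:ℕ) = (k:ℕ)+1+1) := by omega
  simp [zCoeffA, zCoeff, Fin.val_succ, this]

lemma zCoeffA_eq_single {m : ℕ} (x : Fin (m-1)) (k : Fin (m-3)) (hx : (x:ℕ) = (k:ℕ)+2) :
    zCoeffA m x = single1 (m-3) k := by
  funext t
  simp only [zCoeffA, zCoeff, single1, Fin.val_succ, hx, Pi.single_apply]
  by_cases h : t = k
  · simp [h]
  · have : ¬ ((k:ℕ)+2 = (t:ℕ)+1+1) := by
      intro hh
      exact h (Fin.ext (by omega))
    simp [this, h]; exact fun hh => h (Fin.ext hh.symm)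


/- ## the finsets of nonzero rows -/

def castL (m : ℕ) (i : ℕ) : Fin (m-3+1) := @Nat.cast _ (Fin.NatCast.instNatCast _) i

def SFL (m : ℕ) (W : Finset ℕ) : Finset (Fin (m-3+1)) :=
  insert 0 (W.image (castL m))

def SFA (m : ℕ) (W : Finset ℕ) : Finset (Fin (m-3)) :=
  Finset.univ.filter (fun k => (k:ℕ)+1 ∈ W)

variable {m : ℕ} {W : Finset ℕ}

lemma val_castL_of_le {i : ℕ} (hi : i ≤ m-3) : ((castL m i) : ℕ) = i := by
  rw [castL, Fin.val_natCast, Nat.mod_eq_of_lt (by omega)]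

lemma mem_SFL_iff (hW : ∀ i ∈ W, 1 ≤ i ∧ i ≤ m-3) (j : Fin (m-3+1)) :
    j ∈ SFL m W ↔ (j:ℕ) = 0 ∨ (j:ℕ) ∈ W := by
  constructor
  · intro hj
    rcases Finset.mem_insert.1 hj with h | h
    · left; rw [h]; rfl
    · obtain ⟨i, hi, rfl⟩ := Finset.mem_image.1 h
      right; rw [val_castL_of_le (hW i hi).2]; exact hi
  · rintro (h0 | hw)
    · exact Finset.mem_insert.2 (Or.inl (Fin.ext (by simpa using h0)))
    · refine Finset.mem_insert.2 (Or.inr (Finset.mem_image.2 ⟨(j:ℕ), hw, ?_⟩))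
      exact Fin.cast_val_eq_self j

lemma card_SFL (hW : ∀ i ∈ W, 1 ≤ i ∧ i ≤ m-3) : (SFL m W).card = W.card + 1 := by
  rw [SFL, Finset.card_insert_of_notMem, Finset.card_image_of_injOn]
  · intro i hi j hj hij
    have : ((castL m i) : ℕ) = ((castL m j) : ℕ) := by rw [hij]
    rwa [val_castL_of_le (hW i hi).2, val_castL_of_le (hW j hj).2] at this
  · intro h
    obtain ⟨i, hi, hic⟩ := Finset.mem_image.1 h
    have : ((castL m i) : ℕ) = 0 := by rw [hic]; rfl
    rw [val_castL_of_le (hW i hi).2] at this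
    have := (hW i hi).1
    omega

lemma mem_SFA_iff (k : Fin (m-3)) : k ∈ SFA m W ↔ (k:ℕ)+1 ∈ W := by
  simp [SFA]

lemma card_SFA (hW : ∀ i ∈ W, 1 ≤ i ∧ i ≤ m-3) : (SFA m W).card = W.card := by
  refine Finset.card_bij (fun k _ => (k:ℕ)+1) ?_ ?_ ?_
  · intro k hk; exact (mem_SFA_iff k).1 hk
  · intro k _ k' _ h
    have h : (k:ℕ)+1 = (k':ℕ)+1 := h
    exact Fin.ext (by omega)
  · intro i hi
    have h1 := (hW i hi).1
    have h2 := (hW i hi).2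
    have hi' : i - 1 < m - 3 := by omega
    refine ⟨⟨i-1, hi'⟩, ?_, by simp; omega⟩
    rw [mem_SFA_iff]
    have : (⟨i-1, hi'⟩ : Fin (m-3)).val + 1 = i := by simp; omega
    rwa [this]


/- ## span computations for Iflat -/

lemma zmem_spanL (hW : ∀ i ∈ W, 1 ≤ i ∧ i ≤ m-3) (x : Fin (m-1))
    (hx : (x:ℕ) = 0 ∨ (x:ℕ) = 1 ∨ ∃ i ∈ W, (x:ℕ) = i + 1) :
    zCoeff m x ∈ span ℂ (single1 (m-3+1) '' ((SFL m W : Finset (Fin (m-3+1))) : Set (Fin (m-3+1)))) := by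
  rcases hx with h0 | h1 | ⟨i, hi, hx⟩
  · rw [zCoeff_eq_zero x h0]; exact zero_mem _
  · rw [zCoeff_eq_single x 0 (by simpa using h1)]
    refine subset_span ⟨0, ?_, rfl⟩
    exact Finset.mem_coe.2 ((mem_SFL_iff hW 0).2 (Or.inl rfl))
  · have hi3 := (hW i hi).2
    rw [zCoeff_eq_single x (castL m i) (by rw [val_castL_of_le hi3]; exact hx)]
    refine subset_span ⟨castL m i, ?_, rfl⟩
    refine Finset.mem_coe.2 ((mem_SFL_iff hW _).2 (Or.inr ?_))
    rwa [val_castL_of_le hi3]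

lemma span_colfun_Iflat (hm : 4 ≤ m) (hW : ∀ i ∈ W, 1 ≤ i ∧ i ≤ m-3) (hne : W.Nonempty) :
    span ℂ (colfun m '' Iflat m W)
      = span ℂ (single1 (m-3+1) '' ((SFL m W : Finset (Fin (m-3+1))) : Set (Fin (m-3+1)))) := by
  apply le_antisymm
  · rw [span_le]
    rintro _ ⟨c, hc, rfl⟩
    obtain ⟨⟨i, hi, hb⟩, ha⟩ := hc
    rw [SetLike.mem_coe, colfun_eq]
    exact sub_mem (zmem_spanL hW c.1.2 (Or.inr (Or.inr ⟨i, hi, hb⟩))) (zmem_spanL hW c.1.1 ha)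
  · rw [span_le]
    rintro _ ⟨j, hj, rfl⟩
    rw [SetLike.mem_coe]
    rcases (mem_SFL_iff hW j).1 (Finset.mem_coe.1 hj) with h0 | hw
    · -- j = 0 : use columns (0, w+1) and (1, w+1)
      have hj0 : j = 0 := Fin.ext (by simpa using h0)
      subst hj0
      obtain ⟨w, hw⟩ := hne
      have hw1 := (hW w hw).1
      have hw3 := (hW w hw).2
      refine ?_
      have hwlt : w + 1 < m - 1 := by omega
      set c0 : ColIdx m := ⟨(⟨0, by omega⟩, ⟨w+1, hwlt⟩), by
        refine ⟨by simp [Fin.lt_def], by simp; omega⟩⟩ with hc0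
      set c1 : ColIdx m := ⟨(⟨1, by omega⟩, ⟨w+1, hwlt⟩), by
        refine ⟨by simp [Fin.lt_def]; omega, by simp⟩⟩ with hc1
      have m0 : c0 ∈ Iflat m W := ⟨⟨w, hw, rfl⟩, Or.inl rfl⟩
      have m1 : c1 ∈ Iflat m W := ⟨⟨w, hw, rfl⟩, Or.inr (Or.inl rfl)⟩
      have key : single1 (m-3+1) 0 = colfun m c0 - colfun m c1 := by
        rw [colfun_eq, colfun_eq]
        rw [zCoeff_eq_single (c0.1.2) (castL m w) (by simp only [val_castL_of_le hw3]; rfl)]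
        rw [zCoeff_eq_zero (c0.1.1) rfl]
        rw [zCoeff_eq_single (c1.1.1) 0 (by simp; rfl)]
        abel
      rw [key]
      exact sub_mem (subset_span ⟨c0, m0, rfl⟩) (subset_span ⟨c1, m1, rfl⟩)
    · -- j.val ∈ W : use column (0, j+1)
      have hj1 := (hW _ hw).1
      have hj3 := (hW _ hw).2
      have hjlt : (j:ℕ) + 1 < m - 1 := by omega
      set c0 : ColIdx m := ⟨(⟨0, by omega⟩, ⟨(j:ℕ)+1, hjlt⟩), by
        refine ⟨by simp [Fin.lt_def], fun h => by have h2 : (j:ℕ) + 1 = 1 := h.2; omega⟩⟩ with hc0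
      have m0 : c0 ∈ Iflat m W := ⟨⟨(j:ℕ), hw, rfl⟩, Or.inl rfl⟩
      have key : single1 (m-3+1) j = colfun m c0 := by
        rw [colfun_eq]
        rw [zCoeff_eq_single (c0.1.2) j rfl]
        rw [zCoeff_eq_zero (c0.1.1) rfl]
        rw [sub_zero]
      rw [key]
      exact subset_span ⟨c0, m0, rfl⟩

lemma zmem_spanA (hm : 4 ≤ m) (hW : ∀ i ∈ W, 1 ≤ i ∧ i ≤ m-3) (x : Fin (m-1))
    (hx : (x:ℕ) = 0 ∨ (x:ℕ) = 1 ∨ ∃ i ∈ W, (x:ℕ) = i + 1) :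
    zCoeffA m x ∈ span ℂ (single1 (m-3) '' ((SFA m W : Finset (Fin (m-3))) : Set (Fin (m-3)))) := by
  rcases hx with h0 | h1 | ⟨i, hi, hx⟩
  · rw [zCoeffA_eq_zero x (by omega)]; exact zero_mem _
  · rw [zCoeffA_eq_zero x (by omega)]; exact zero_mem _
  · have hi1 := (hW i hi).1
    have hi3 := (hW i hi).2
    have hk : i - 1 < m - 3 := by omega
    rw [zCoeffA_eq_single x ⟨i-1, hk⟩ (by simp; omega)]
    refine subset_span ⟨⟨i-1, hk⟩, ?_, rfl⟩
    refine Finset.mem_coe.2 ((mem_SFA_iff _).2 ?_)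
    have : (⟨i-1, hk⟩ : Fin (m-3)).val + 1 = i := by simp; omega
    rwa [this]

lemma span_colfunA_Iflat (hm : 4 ≤ m) (hW : ∀ i ∈ W, 1 ≤ i ∧ i ≤ m-3) :
    span ℂ (colfunA m '' Iflat m W)
      = span ℂ (single1 (m-3) '' ((SFA m W : Finset (Fin (m-3))) : Set (Fin (m-3)))) := by
  apply le_antisymm
  · rw [span_le]
    rintro _ ⟨c, hc, rfl⟩
    obtain ⟨⟨i, hi, hb⟩, ha⟩ := hc
    rw [SetLike.mem_coe, colfunA_eq]
    exact sub_mem (zmem_spanA hm hW c.1.2 (Or.inr (Or.inr ⟨i, hi, hb⟩))) (zmem_spanA hm hW c.1.1 ha)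
  · rw [span_le]
    rintro _ ⟨k, hk, rfl⟩
    rw [SetLike.mem_coe]
    have hkW : (k:ℕ)+1 ∈ W := (mem_SFA_iff k).1 (Finset.mem_coe.1 hk)
    have hk3 := (hW _ hkW).2
    have hklt : (k:ℕ) + 2 < m - 1 := by omega
    set c0 : ColIdx m := ⟨(⟨0, by omega⟩, ⟨(k:ℕ)+2, hklt⟩), by
      refine ⟨by simp [Fin.lt_def], by simp⟩⟩ with hc0
    have m0 : c0 ∈ Iflat m W := ⟨⟨(k:ℕ)+1, hkW, rfl⟩, Or.inl rfl⟩
    have key : single1 (m-3) k = colfunA m c0 := by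
      rw [colfunA_eq]
      rw [zCoeffA_eq_single (c0.1.2) k rfl]
      rw [zCoeffA_eq_zero (c0.1.1) (by show (0:ℕ) ≤ 1; omega)]
      rw [sub_zero]
    rw [key]
    exact subset_span ⟨c0, m0, rfl⟩

lemma rkL_Iflat (hm : 4 ≤ m) (hW : ∀ i ∈ W, 1 ≤ i ∧ i ≤ m-3) (hne : W.Nonempty) :
    rkL ℂ (Lm m) (Iflat m W) = W.card + 1 := by
  rw [rkL_def, span_colfun_Iflat hm hW hne, finrank_span_single, card_SFL hW]

lemma rkA_Iflat (hm : 4 ≤ m) (hW : ∀ i ∈ W, 1 ≤ i ∧ i ≤ m-3) :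
    rkA ℂ (Lm m) (Iflat m W) = W.card := by
  rw [rkA_def, span_colfunA_Iflat hm hW, finrank_span_single, card_SFA hW]


/- ## flatness -/

lemma colfun_not_mem_span (hW : ∀ i ∈ W, 1 ≤ i ∧ i ≤ m-3) {c : ColIdx m}
    (hc : c ∉ Iflat m W) :
    colfun m c ∉ span ℂ (single1 (m-3+1) '' ((SFL m W : Finset (Fin (m-3+1))) : Set (Fin (m-3+1)))) := by
  intro hmem
  have habl : (c.1.1 : ℕ) < (c.1.2 : ℕ) := c.2.1
  have hbmax : (c.1.2 : ℕ) < m - 1 := c.1.2.isLt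
  have hamax : (c.1.1 : ℕ) < m - 1 := c.1.1.isLt
  have hne01 : ¬((c.1.1 : ℕ) = 0 ∧ (c.1.2 : ℕ) = 1) := c.2.2
  by_cases hbW : ∃ i ∈ W, (c.1.2 : ℕ) = i + 1
  · -- the a-condition must fail
    have haf : ¬((c.1.1 : ℕ) = 0 ∨ (c.1.1 : ℕ) = 1 ∨ ∃ i ∈ W, (c.1.1 : ℕ) = i+1) :=
      fun h => hc ⟨hbW, h⟩
    push_neg at haf
    obtain ⟨h0, h1, hWa⟩ := haf
    have hof : (m : ℕ) - 3 + 1 = m - 2 := by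
      obtain ⟨i, hi, _⟩ := hbW
      have := (hW i hi).2
      omega
    have hjlt : (c.1.1 : ℕ) - 1 < m - 3 + 1 := by omega
    set j : Fin (m-3+1) := ⟨(c.1.1 : ℕ) - 1, hjlt⟩ with hj
    have hjS : j ∉ SFL m W := by
      rw [mem_SFL_iff hW]
      push_neg
      refine ⟨by simp [hj]; omega, ?_⟩
      intro hmemW
      exact hWa _ hmemW (by simp [hj] at hmemW ⊢; omega)
    have hz := apply_eq_zero_of_mem_span_single hjS hmem
    have hc1 : ¬ ((c.1.2 : ℕ) = (j:ℕ) + 1) := by simp [hj]; omega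
    have hc2 : (c.1.1 : ℕ) = (j:ℕ) + 1 := by simp [hj]; omega
    rw [colfun_eq, Pi.sub_apply] at hz
    simp only [zCoeff, if_neg hc1, if_pos hc2] at hz
    norm_num at hz
  · have hjlt : (c.1.2 : ℕ) - 1 < m - 3 + 1 := by
      rcases Finset.eq_empty_or_nonempty W with rfl | ⟨i, hi⟩
      · simp at hbW
        omega
      · have := (hW i hi).2
        have h1i := (hW i hi).1
        omega
    set j : Fin (m-3+1) := ⟨(c.1.2 : ℕ) - 1, hjlt⟩ with hj
    have hjS : j ∉ SFL m W := by
      rw [mem_SFL_iff hW]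
      push_neg
      constructor
      · simp [hj]
        omega
      · intro hmemW
        exact hbW ⟨(j:ℕ), hmemW, by simp [hj]; omega⟩
    have hz := apply_eq_zero_of_mem_span_single hjS hmem
    have hc1 : (c.1.2 : ℕ) = (j:ℕ) + 1 := by simp [hj]; omega
    have hc2 : ¬ ((c.1.1 : ℕ) = (j:ℕ) + 1) := by simp [hj]; omega
    rw [colfun_eq, Pi.sub_apply] at hz
    simp only [zCoeff, if_pos hc1, if_neg hc2] at hz
    norm_num at hz

lemma isFlat_Iflat (hm : 4 ≤ m) (hW : ∀ i ∈ W, 1 ≤ i ∧ i ≤ m-3) (hne : W.Nonempty) :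
    IsFlat ℂ (Lm m) (Iflat m W) := by
  intro c hc
  rw [rkL_def, rkL_def]
  have hle : span ℂ (colfun m '' Iflat m W) ≤ span ℂ (colfun m '' insert c (Iflat m W)) :=
    span_mono (Set.image_mono (Set.subset_insert _ _))
  have hcm : colfun m c ∈ span ℂ (colfun m '' insert c (Iflat m W)) :=
    subset_span ⟨c, Set.mem_insert _ _, rfl⟩
  have hnm : colfun m c ∉ span ℂ (colfun m '' Iflat m W) := by
    rw [span_colfun_Iflat hm hW hne]
    exact colfun_not_mem_span hW hc
  exact Submodule.finrank_lt_finrank_of_lt (lt_of_le_of_ne hle (fun h => hnm (h ▸ hcm)))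



def castP (m : ℕ) [NeZero (m-1)] (i : ℕ) : Fin (m-1) := @Nat.cast _ (Fin.NatCast.instNatCast _) i

lemma val_castP (m : ℕ) [NeZero (m-1)] {i : ℕ} (h : i < m-1) : ((castP m i) : ℕ) = i := by
  rw [castP, Fin.val_natCast, Nat.mod_eq_of_lt h]

variable {r : ℕ}

lemma submatrixEquiv_Iflat (hm : 4 ≤ m) (hr : r ≤ m-4)
    (hW : ∀ i ∈ W, 1 ≤ i ∧ i ≤ m-3) (hcard : W.card = m-3-r) :
    SubmatrixEquivLm m r (Iflat m W) := by
  haveI : NeZero (m-1) := ⟨by omega⟩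
  set S : Finset (Fin (m-1)) :=
    insert (castP m 0) (insert (castP m 1) (W.image (fun i => castP m (i+1)))) with hS
  have hmemS : ∀ x : Fin (m-1),
      x ∈ S ↔ ((x:ℕ) = 0 ∨ (x:ℕ) = 1 ∨ ∃ i ∈ W, (x:ℕ) = i+1) := by
    intro x
    simp only [hS, Finset.mem_insert, Finset.mem_image]
    constructor
    · rintro (rfl | rfl | ⟨i, hi, rfl⟩)
      · exact Or.inl (val_castP m (by omega))
      · exact Or.inr (Or.inl (val_castP m (by omega)))
      · exact Or.inr (Or.inr ⟨i, hi, val_castP m (by have := (hW i hi).2; omega)⟩)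
    · rintro (h | h | ⟨i, hi, hx⟩)
      · exact Or.inl (Fin.ext (by rw [h, val_castP m (by omega)]))
      · exact Or.inr (Or.inl (Fin.ext (by rw [h, val_castP m (by omega)])))
      · exact Or.inr (Or.inr ⟨i, hi, Fin.ext (by
          rw [val_castP m (by have := (hW i hi).2; omega), hx])⟩)
  have hv0 : ((castP m 0) : ℕ) = 0 := val_castP m (by omega)
  have hv1 : ((castP m 1) : ℕ) = 1 := val_castP m (by omega)
  have hScard : S.card = m-r-1 := by
    have h2 : (W.image (fun i => castP m (i+1))).card = W.card := by
      apply Finset.card_image_of_injOn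
      intro i hi j hj hij
      have hij' : castP m (i+1) = castP m (j+1) := hij
      have : ((castP m (i+1)) : ℕ) = ((castP m (j+1)) : ℕ) := by rw [hij']
      rw [val_castP m (by have := (hW i hi).2; omega),
          val_castP m (by have := (hW j hj).2; omega)] at this
      omega
    have h1 : castP m 1 ∉ W.image (fun i => castP m (i+1)) := by
      intro h
      obtain ⟨i, hi, hc⟩ := Finset.mem_image.1 h
      have : ((castP m (i+1)) : ℕ) = ((castP m 1) : ℕ) := by rw [hc]
      rw [val_castP m (by have := (hW i hi).2; omega), hv1] at this
      have := (hW i hi).1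
      omega
    have h0 : castP m 0 ∉ insert (castP m 1) (W.image (fun i => castP m (i+1))) := by
      intro h
      rcases Finset.mem_insert.1 h with h | h
      · have : ((castP m 0) : ℕ) = ((castP m 1) : ℕ) := by rw [h]
        rw [hv0, hv1] at this
        omega
      · obtain ⟨i, hi, hc⟩ := Finset.mem_image.1 h
        have : ((castP m (i+1)) : ℕ) = ((castP m 0) : ℕ) := by rw [hc]
        rw [val_castP m (by have := (hW i hi).2; omega), hv0] at this
        omega
    rw [hS, Finset.card_insert_of_notMem h0, Finset.card_insert_of_notMem h1, h2]
    omega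
  set f := S.orderEmbOfFin hScard with hf
  have hfS : ∀ a, f a ∈ S := fun a => Finset.orderEmbOfFin_mem S hScard a
  have hfrange : ∀ x ∈ S, ∃ a, f a = x := by
    intro x hx
    have : x ∈ Set.range f := by rw [Finset.range_orderEmbOfFin]; exact hx
    exact this
  have h0lt : 0 < m-r-1 := by omega
  have h1lt : 1 < m-r-1 := by omega
  have hf0 : f ⟨0, h0lt⟩ = castP m 0 := by
    obtain ⟨a, ha⟩ := hfrange (castP m 0) (Finset.mem_insert_self _ _)
    have hle1 : f ⟨0, h0lt⟩ ≤ f a := f.monotone (by simp [Fin.le_def])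
    have hle2 : f a ≤ f ⟨0, h0lt⟩ := by
      rw [ha, Fin.le_def, hv0]
      omega
    rw [← ha]
    exact le_antisymm hle1 hle2
  have hf1 : f ⟨1, h1lt⟩ = castP m 1 := by
    obtain ⟨a, ha⟩ := hfrange (castP m 1)
      (Finset.mem_insert_of_mem (Finset.mem_insert_self _ _))
    have hane : a ≠ ⟨0, h0lt⟩ := by
      intro h
      rw [h, hf0] at ha
      have : ((castP m 0) : ℕ) = ((castP m 1) : ℕ) := by rw [ha]
      rw [hv0, hv1] at this
      omega
    have ha1 : (⟨1, h1lt⟩ : Fin (m-r-1)) ≤ a := by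
      have hv : a.val ≠ 0 := fun h => hane (Fin.ext h)
      have : (1:ℕ) ≤ a.val := by omega
      exact this
    have hle1 : f ⟨1, h1lt⟩ ≤ f a := f.monotone ha1
    have hgt : f ⟨0, h0lt⟩ < f ⟨1, h1lt⟩ := f.strictMono (by simp [Fin.lt_def])
    rw [hf0] at hgt
    have hge : 1 ≤ ((f ⟨1, h1lt⟩) : ℕ) := by
      rw [Fin.lt_def, hv0] at hgt
      omega
    rw [← ha]
    apply le_antisymm hle1
    rw [ha, Fin.le_def, hv1]
    exact hge
  have hfpos : ∀ s : Fin (m-r-1), (s:ℕ) ≠ 0 → 1 ≤ ((f s) : ℕ) := by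
    intro s hs
    have : f ⟨0, h0lt⟩ < f s := f.strictMono (show (0:ℕ) < s.val by omega)
    rw [hf0, Fin.lt_def, hv0] at this
    omega
  have ht1 : ∀ t : Fin (m-r-3+1), (t:ℕ)+1 < m-r-1 := by
    intro t
    have := t.isLt
    omega
  set ρ : Fin (m-r-3+1) → Fin (m-3+1) := fun t =>
    ⟨((f ⟨(t:ℕ)+1, ht1 t⟩) : ℕ) - 1, by
      have := (f ⟨(t:ℕ)+1, ht1 t⟩).isLt
      omega⟩ with hρ
  have hρval : ∀ t : Fin (m-r-3+1), ((ρ t) : ℕ) + 1 = ((f ⟨(t:ℕ)+1, ht1 t⟩) : ℕ) := by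
    intro t
    have := hfpos ⟨(t:ℕ)+1, ht1 t⟩ (by simp)
    simp only [hρ]
    omega
  -- the equivalence
  have hFlt : ∀ c : ColIdx (m-r), f c.1.1 < f c.1.2 := fun c => f.strictMono c.2.1
  have hb' : ∀ c : ColIdx (m-r), ∃ i ∈ W, ((f c.1.2) : ℕ) = i + 1 := by
    intro c
    rcases (hmemS _).1 (hfS c.1.2) with h | h | h
    · exfalso
      have := hFlt c
      rw [Fin.lt_def] at this
      omega
    · exfalso
      have hc2 : c.1.2 = ⟨1, h1lt⟩ := f.injective (by rw [hf1]; exact Fin.ext (by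
        rw [h, hv1]))
      have hc1 : (c.1.1 : ℕ) = 0 := by
        have h6 := c.2.1
        rw [hc2] at h6
        have h7 : ((c.1.1 : Fin (m-r-1)) : ℕ) < 1 := h6
        omega
      exact c.2.2 ⟨hc1, by rw [hc2]⟩
    · exact h
  have hFne : ∀ c : ColIdx (m-r), ¬(((f c.1.1) : ℕ) = 0 ∧ ((f c.1.2) : ℕ) = 1) := by
    intro c ⟨_, h2⟩
    obtain ⟨i, hi, hc⟩ := hb' c
    have := (hW i hi).1
    omega
  have hFmem : ∀ c : ColIdx (m-r),
      (⟨(f c.1.1, f c.1.2), hFlt c, hFne c⟩ : ColIdx m) ∈ Iflat m W := by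
    intro c
    refine ⟨hb' c, ?_⟩
    exact (hmemS _).1 (hfS c.1.1)
  set eFun : ColIdx (m-r) → ↥(Iflat m W) :=
    fun c => ⟨⟨(f c.1.1, f c.1.2), hFlt c, hFne c⟩, hFmem c⟩ with heFun
  have hbij : Function.Bijective eFun := by
    constructor
    · intro c c' h
      have h1 : f c.1.1 = f c'.1.1 := congrArg (fun x => (x : ↥(Iflat m W)).1.1.1) h
      have h2 : f c.1.2 = f c'.1.2 := congrArg (fun x => (x : ↥(Iflat m W)).1.1.2) h
      exact Subtype.ext (Prod.ext (f.injective h1) (f.injective h2))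
    · rintro ⟨⟨⟨a, b⟩, hab, hne⟩, hmem⟩
      obtain ⟨⟨i, hi, hbv⟩, hav⟩ := hmem
      have hbS : b ∈ S := (hmemS b).2 (Or.inr (Or.inr ⟨i, hi, hbv⟩))
      have haS : a ∈ S := (hmemS a).2 hav
      obtain ⟨a', ha'⟩ := hfrange a haS
      obtain ⟨b', hb'2⟩ := hfrange b hbS
      have hlt : a' < b' := by
        rw [← f.lt_iff_lt, ha', hb'2]
        exact hab
      have hne' : ¬((a' : ℕ) = 0 ∧ (b' : ℕ) = 1) := by
        rintro ⟨h1, h2⟩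
        apply hne
        constructor
        · have : a' = ⟨0, h0lt⟩ := Fin.ext h1
          rw [← ha', this, hf0, val_castP m (by omega)]
        · have : b' = ⟨1, h1lt⟩ := Fin.ext h2
          rw [← hb'2, this, hf1, val_castP m (by omega)]
      refine ⟨⟨(a', b'), hlt, hne'⟩, ?_⟩
      apply Subtype.ext
      apply Subtype.ext
      exact Prod.ext ha' hb'2
  set e : ColIdx (m-r) ≃ ↥(Iflat m W) := Equiv.ofBijective eFun hbij with he
  refine ⟨ρ, e, ?_, ?_, ?_⟩
  · -- StrictMono ρ
    intro t t' htt
    have : f ⟨(t:ℕ)+1, ht1 t⟩ < f ⟨(t':ℕ)+1, ht1 t'⟩ := by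
      apply f.strictMono
      rw [Fin.lt_def]
      simp only []
      rw [Fin.lt_def] at htt
      omega
    rw [Fin.lt_def] at this ⊢
    have p1 := hρval t
    have p2 := hρval t'
    omega
  · -- zero rows
    intro t ht c hc
    have hkey : ∀ x : Fin (m-1), x ∈ S → (x:ℕ) = (t:ℕ)+1 → False := by
      intro x hx hxv
      obtain ⟨s, hs⟩ := hfrange x hx
      have hs0 : (s:ℕ) ≠ 0 := by
        intro h
        have : s = ⟨0, h0lt⟩ := Fin.ext h
        rw [this, hf0] at hs
        have : ((castP m 0) : ℕ) = (x:ℕ) := by rw [hs]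
        rw [val_castP m (by omega)] at this
        omega
      have hslt : (s:ℕ) - 1 < m-r-3+1 := by
        have := s.isLt
        omega
      apply ht
      refine ⟨⟨(s:ℕ)-1, hslt⟩, ?_⟩
      have hseq : (⟨((⟨(s:ℕ)-1, hslt⟩ : Fin (m-r-3+1)):ℕ)+1, ht1 _⟩ : Fin (m-r-1)) = s := by
        apply Fin.ext
        simp only []
        omega
      apply Fin.ext
      have := hρval ⟨(s:ℕ)-1, hslt⟩
      rw [hseq, hs] at this
      omega
    obtain ⟨⟨i, hi, hbv⟩, hav⟩ := hc
    have hbS : c.1.2 ∈ S := (hmemS _).2 (Or.inr (Or.inr ⟨i, hi, hbv⟩))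
    have haS : c.1.1 ∈ S := (hmemS _).2 hav
    have hb0 : ¬((c.1.2 : ℕ) = (t:ℕ)+1) := fun h => hkey _ hbS h
    have ha0 : ¬((c.1.1 : ℕ) = (t:ℕ)+1) := fun h => hkey _ haS h
    rw [Lm_apply, if_neg hb0, if_neg ha0, sub_zero]
  · -- entries
    intro t c
    have hiff : ∀ x : Fin (m-r-1), (((f x) : ℕ) = ((ρ t):ℕ)+1) ↔ ((x:ℕ) = (t:ℕ)+1) := by
      intro x
      rw [hρval t]
      constructor
      · intro h
        have : x = ⟨(t:ℕ)+1, ht1 t⟩ := f.injective (Fin.ext h)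
        rw [this]
      · intro h
        have : x = ⟨(t:ℕ)+1, ht1 t⟩ := Fin.ext h
        rw [this]
    have hc1 : ((↑(e c) : ColIdx m)).1.1 = f c.1.1 := rfl
    have hc2 : ((↑(e c) : ColIdx m)).1.2 = f c.1.2 := rfl
    rw [Lm_apply, Lm_apply, hc1, hc2]
    congr 1
    · exact if_congr (hiff c.1.2).symm rfl rfl
    · exact if_congr (hiff c.1.1).symm rfl rfl


/- ## forward direction -/

lemma rkA_eq_rkL_of_zero_row {I : Set (ColIdx m)} (h0 : ∀ c ∈ I, Lm m 0 c = 0) :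
    rkA ℂ (Lm m) I = rkL ℂ (Lm m) I := by
  classical
  set π : (Fin (m-3+1) → ℂ) →ₗ[ℂ] (Fin (m-3) → ℂ) := LinearMap.funLeft ℂ ℂ Fin.succ with hπ
  have himg : colfunA m '' I = π '' (colfun m '' I) := by
    rw [Set.image_image]
    rfl
  have hspan : span ℂ (colfunA m '' I) = Submodule.map π (span ℂ (colfun m '' I)) := by
    rw [himg, Submodule.span_image]
  set p := span ℂ (colfun m '' I) with hp
  have hp0 : ∀ v ∈ p, v 0 = 0 := by
    intro v hv
    have hle : p ≤ LinearMap.ker (LinearMap.proj (R := ℂ) (φ := fun _ : Fin (m-3+1) => ℂ) 0) := by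
      rw [hp, span_le]
      rintro _ ⟨c, hc, rfl⟩
      exact h0 c hc
    exact hle hv
  have hinj : Function.Injective (π.comp p.subtype) := by
    intro x y hxy
    apply Subtype.ext
    funext j
    induction j using Fin.cases with
    | zero => rw [hp0 x.1 x.2, hp0 y.1 y.2]
    | succ k =>
      have := congrFun (congrArg (fun g => (g : Fin (m-3) → ℂ)) hxy) k
      simpa [hπ, LinearMap.funLeft] using this
  have h1 : Submodule.map π p = LinearMap.range (π.comp p.subtype) := by
    rw [LinearMap.range_comp, Submodule.range_subtype]
  rw [rkA_def, rkL_def, hspan, ← hp, h1, LinearMap.finrank_range_of_inj hinj]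

variable {r : ℕ}

lemma forward_direction {I : Set (ColIdx m)} (hm : 4 ≤ m) (hr : r ≤ m-4)
    (hrk : rkA ℂ (Lm m) I + 1 = rkL ℂ (Lm m) I) (hsub : SubmatrixEquivLm m r I) :
    ∃ Wf : Finset ℕ, (↑Wf : Set ℕ) ⊆ Set.Icc 1 (m-3) ∧ Wf.card = m-3-r ∧ I = Iflat m Wf := by
  obtain ⟨ρ, e, hmono, hzero, hent⟩ := hsub
  have h0mem : (0 : Fin (m-3+1)) ∈ Set.range ρ := by
    by_contra h0
    have := rkA_eq_rkL_of_zero_row (hzero 0 h0)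
    omega
  set Wf : Finset ℕ := ((Finset.univ.image ρ).image (Fin.val)).erase 0 with hWf
  have hmemWf : ∀ i : ℕ, i ∈ Wf ↔ (i ≠ 0 ∧ ∃ t, ((ρ t) : ℕ) = i) := by
    intro i
    simp [hWf, Finset.mem_erase, Finset.mem_image]
  have hWfsub : ∀ i ∈ Wf, 1 ≤ i ∧ i ≤ m-3 := by
    intro i hi
    obtain ⟨hne, t, ht⟩ := (hmemWf i).1 hi
    have := (ρ t).isLt
    omega
  have hWfcard : Wf.card = m-3-r := by
    have c1 : (Finset.univ.image ρ).card = m-r-3+1 := by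
      rw [Finset.card_image_of_injective _ hmono.injective, Finset.card_univ, Fintype.card_fin]
    have c2 : ((Finset.univ.image ρ).image Fin.val).card = m-r-3+1 := by
      rw [Finset.card_image_of_injective _ Fin.val_injective, c1]
    have h0in : (0:ℕ) ∈ (Finset.univ.image ρ).image Fin.val := by
      obtain ⟨t, ht⟩ := h0mem
      exact Finset.mem_image.2 ⟨ρ t, Finset.mem_image.2 ⟨t, Finset.mem_univ _, rfl⟩,
        by rw [ht]; rfl⟩
    rw [hWf, Finset.card_erase_of_mem h0in, c2]
    omega
  have hIsub : I ⊆ Iflat m Wf := by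
    intro c hc
    have habl : (c.1.1 : ℕ) < (c.1.2 : ℕ) := c.2.1
    have hb2 : 2 ≤ (c.1.2 : ℕ) := by
      by_contra h
      have h1 : (c.1.2:ℕ) = 1 := by omega
      have h2 : (c.1.1:ℕ) = 0 := by omega
      exact c.2.2 ⟨h2, h1⟩
    have hblt : (c.1.2:ℕ) < m-1 := c.1.2.isLt
    have halt : (c.1.1:ℕ) < m-1 := c.1.1.isLt
    have hof : m - 3 + 1 = m - 2 := by omega
    have hbrange : ∃ t, ((ρ t):ℕ) = (c.1.2:ℕ) - 1 := by
      have hlt' : (c.1.2:ℕ) - 1 < m-3+1 := by omega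
      set tb : Fin (m-3+1) := ⟨(c.1.2:ℕ)-1, hlt'⟩ with htbd
      by_cases htb : tb ∈ Set.range ρ
      · obtain ⟨t, ht⟩ := htb
        exact ⟨t, by rw [ht]⟩
      · exfalso
        have hthis := hzero tb htb c hc
        have e1 : (c.1.2:ℕ) = (tb:ℕ)+1 := by simp [htbd]; omega
        have e2 : ¬((c.1.1:ℕ) = (tb:ℕ)+1) := by simp [htbd]; omega
        rw [Lm_apply, if_pos e1, if_neg e2, sub_zero] at hthis
        norm_num at hthis
    obtain ⟨tb, htb⟩ := hbrange
    refine ⟨⟨(c.1.2:ℕ)-1, (hmemWf _).2 ⟨by omega, tb, htb⟩, by omega⟩, ?_⟩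
    by_cases h0 : (c.1.1:ℕ) = 0
    · exact Or.inl h0
    by_cases h1 : (c.1.1:ℕ) = 1
    · exact Or.inr (Or.inl h1)
    have ha2 : 2 ≤ (c.1.1:ℕ) := by omega
    have harange : ∃ t, ((ρ t):ℕ) = (c.1.1:ℕ) - 1 := by
      have hlt' : (c.1.1:ℕ) - 1 < m-3+1 := by omega
      set ta : Fin (m-3+1) := ⟨(c.1.1:ℕ)-1, hlt'⟩ with htad
      by_cases hta : ta ∈ Set.range ρ
      · obtain ⟨t, ht⟩ := hta
        exact ⟨t, by rw [ht]⟩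
      · exfalso
        have hthis := hzero ta hta c hc
        have e1 : ¬((c.1.2:ℕ) = (ta:ℕ)+1) := by simp [htad]; omega
        have e2 : (c.1.1:ℕ) = (ta:ℕ)+1 := by simp [htad]; omega
        rw [Lm_apply, if_neg e1, if_pos e2, zero_sub] at hthis
        norm_num at hthis
    obtain ⟨ta, hta⟩ := harange
    exact Or.inr (Or.inr ⟨(c.1.1:ℕ)-1, (hmemWf _).2 ⟨by omega, ta, hta⟩, by omega⟩)
  obtain ⟨ρ', e', _, _, _⟩ := submatrixEquiv_Iflat hm hr hWfsub hWfcard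
  have hcard1 : I.ncard = Nat.card (ColIdx (m-r)) := by
    rw [← Nat.card_coe_set_eq]
    exact (Nat.card_congr e.symm)
  have hcard2 : (Iflat m Wf).ncard = Nat.card (ColIdx (m-r)) := by
    rw [← Nat.card_coe_set_eq]
    exact (Nat.card_congr e'.symm)
  have heq : I = Iflat m Wf :=
    Set.eq_of_subset_of_ncard_le hIsub (by rw [hcard1, hcard2]) (Set.toFinite _)
  exact ⟨Wf, fun i hi => Set.mem_Icc.2 (hWfsub i hi), hWfcard, heq⟩


/- ## injectivity of W ↦ Iflat W and the final theorem -/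

lemma Iflat_inj_sub (hm : 4 ≤ m) {W W' : Finset ℕ} (hW : ∀ i ∈ W, 1 ≤ i ∧ i ≤ m-3)
    (h : Iflat m W ⊆ Iflat m W') : W ⊆ W' := by
  intro i hi
  have hi1 := (hW i hi).1
  have hi3 := (hW i hi).2
  have hlt : i+1 < m-1 := by omega
  have hmem : (⟨(⟨0, by omega⟩, ⟨i+1, hlt⟩), by
      refine ⟨by simp [Fin.lt_def], by simp; omega⟩⟩ : ColIdx m) ∈ Iflat m W :=
    ⟨⟨i, hi, rfl⟩, Or.inl rfl⟩
  obtain ⟨⟨i', hi', hv⟩, -⟩ := h hmem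
  have h2 : i + 1 = i' + 1 := hv
  have h3 : i = i' := by omega
  rwa [h3]


end Statement14Helpers

/-- Proposition 5.3.  For `r = 0, …, m-4`, the type (ii) flats of `M(L_m)`
whose submatrix is equivalent to `L_{m-r}` are exactly the flats `I_r(W)` for
`W ⊆ {1, …, m-3}` with `|W| = m-3-r`; there are exactly `C(m-3, r)` of them. -/
theorem typeII_flats_equivalent_to_Lmr
    (m r : ℕ) (hm : 4 ≤ m) (hr : r ≤ m - 4) :
    {I : Set (ColIdx m) | IsFlat ℂ (Lm m) I ∧ rkA ℂ (Lm m) I + 1 = rkL ℂ (Lm m) I ∧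
        SubmatrixEquivLm m r I}
      = {I : Set (ColIdx m) | ∃ W : Finset ℕ, (↑W : Set ℕ) ⊆ Set.Icc 1 (m-3) ∧
          W.card = m-3-r ∧ I = Iflat m W} ∧
    {I : Set (ColIdx m) | IsFlat ℂ (Lm m) I ∧ rkA ℂ (Lm m) I + 1 = rkL ℂ (Lm m) I ∧
        SubmatrixEquivLm m r I}.ncard = Nat.choose (m-3) r := by
  have hset : {I : Set (ColIdx m) | IsFlat ℂ (Lm m) I ∧ rkA ℂ (Lm m) I + 1 = rkL ℂ (Lm m) I ∧
        SubmatrixEquivLm m r I}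
      = {I : Set (ColIdx m) | ∃ W : Finset ℕ, (↑W : Set ℕ) ⊆ Set.Icc 1 (m-3) ∧
          W.card = m-3-r ∧ I = Iflat m W} := by
    ext I
    simp only [Set.mem_setOf_eq]
    constructor
    · rintro ⟨hflat, hrk, hsub⟩
      exact forward_direction hm hr hrk hsub
    · rintro ⟨W, hWicc, hWcard, rfl⟩
      have hW : ∀ i ∈ W, 1 ≤ i ∧ i ≤ m-3 := fun i hi => Set.mem_Icc.1 (hWicc hi)
      have hne : W.Nonempty := Finset.card_pos.1 (by omega)
      refine ⟨isFlat_Iflat hm hW hne, ?_, submatrixEquiv_Iflat hm hr hW hWcard⟩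
      rw [rkA_Iflat hm hW, rkL_Iflat hm hW hne]
  refine ⟨hset, ?_⟩
  rw [hset]
  have himg : {I : Set (ColIdx m) | ∃ W : Finset ℕ, (↑W : Set ℕ) ⊆ Set.Icc 1 (m-3) ∧
          W.card = m-3-r ∧ I = Iflat m W}
      = (fun W : Finset ℕ => Iflat m W) ''
        {W : Finset ℕ | (↑W : Set ℕ) ⊆ Set.Icc 1 (m-3) ∧ W.card = m-3-r} := by
    ext I
    simp only [Set.mem_setOf_eq, Set.mem_image]
    constructor
    · rintro ⟨W, h1, h2, h3⟩
      exact ⟨W, ⟨h1, h2⟩, h3.symm⟩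
    · rintro ⟨W, ⟨h1, h2⟩, h3⟩
      exact ⟨W, h1, h2, h3.symm⟩
  have hinj : Set.InjOn (fun W : Finset ℕ => Iflat m W)
      {W : Finset ℕ | (↑W : Set ℕ) ⊆ Set.Icc 1 (m-3) ∧ W.card = m-3-r} := by
    intro W hWm W' hWm' heq
    have hW : ∀ i ∈ W, 1 ≤ i ∧ i ≤ m-3 := fun i hi => Set.mem_Icc.1 (hWm.1 hi)
    have hW' : ∀ i ∈ W', 1 ≤ i ∧ i ≤ m-3 := fun i hi => Set.mem_Icc.1 (hWm'.1 hi)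
    exact Finset.Subset.antisymm
      (Iflat_inj_sub hm hW (le_of_eq heq))
      (Iflat_inj_sub hm hW' (le_of_eq heq.symm))
  rw [himg, Set.ncard_image_of_injOn hinj]
  have hset2 : {W : Finset ℕ | (↑W : Set ℕ) ⊆ Set.Icc 1 (m-3) ∧ W.card = m-3-r}
      = ↑(Finset.powersetCard (m-3-r) (Finset.Icc 1 (m-3))) := by
    ext W
    simp only [Set.mem_setOf_eq, Finset.mem_coe, Finset.mem_powersetCard,
      ← Finset.coe_Icc, Finset.coe_subset]
  rw [hset2, Set.ncard_coe_finset, Finset.card_powersetCard, Nat.card_Icc]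
  have h3 : m - 3 + 1 - 1 = m - 3 := by omega
  rw [h3]
  exact Nat.choose_symm (by omega)


end ScatteringPaper
end
end
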